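/- Let G and H be groups and τ : G → H a half-isomorphism. Then τ maps the center of G onto the center of H: τ(Z(G)) = Z(H). -/

import Mathlib

/-!
A half-isomorphism preserves and reflects commutation, and the center is defined by
commutation alone. Reflection is immediate: if `τ x` and `τ y` commute, both candidates for
`τ (x * y)` and for `τ (y * x)` coincide, and injectivity gives `x * y = y * x`.
For preservation, with `a = τ x`, `b = τ y` and (up to passing to `Hᵐᵒᵖ`) `τ (x * y) = a * b`,
compute `τ (x * x * y)` from the two bracketings: it lies in `{a * a * b, a * b * a}` and in
`{a * a * b, b * a * a}`. Unless it equals `a * a * b`, cancelling gives `a * b = b * a`;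
if it does, `(x * y) * (x * y) = (x * x * y) * y` gives
`a * b * a * b ∈ {a * a * b * b, b * a * a * b}`, and cancelling again gives `a * b = b * a`.
-/

def IsHalfHom {G H : Type*} [Mul G] [Mul H] (τ : G → H) : Prop :=
  ∀ x y : G, τ (x * y) = τ x * τ y ∨ τ (x * y) = τ y * τ x

namespace IsHalfHom

variable {G H : Type*}

section Mul

variable [Mul G] [Mul H] {τ : G → H}

theorem map_mul_self (hτ : IsHalfHom τ) (x : G) : τ (x * x) = τ x * τ x :=
  (hτ x x).elim id id

theorem op (hτ : IsHalfHom τ) : IsHalfHom (fun x => MulOpposite.op (τ x)) := fun x y => by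
  rcases hτ x y with h | h <;> simp [h]

theorem commute_of_commute_map (hτ : IsHalfHom τ) (hinj : Function.Injective τ) {x y : G}
    (h : Commute (τ x) (τ y)) : Commute x y := by
  have hxy : τ (x * y) = τ x * τ y := (hτ x y).elim id (·.trans h.eq.symm)
  have hyx : τ (y * x) = τ x * τ y := (hτ y x).elim (·.trans h.eq.symm) id
  exact hinj (hxy.trans hyx.symm)

end Mul

variable [Semigroup G] [Semigroup H] [IsCancelMul H] {τ : G → H}

theorem commute_of_map_mul (hτ : IsHalfHom τ) {x y : G} (hxy : Commute x y)
    (hmul : τ (x * y) = τ x * τ y) : Commute (τ x) (τ y) := by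
  set a := τ x
  set b := τ y
  have hleft : τ (x * x * y) = a * a * b ∨ τ (x * x * y) = b * (a * a) := by
    simpa only [hτ.map_mul_self] using hτ (x * x) y
  have hright : τ (x * x * y) = a * (a * b) ∨ τ (x * x * y) = a * b * a := by
    simpa only [mul_assoc, hmul] using hτ x (x * y)
  rcases hright with hright | hright
  · have hsq : τ (x * y * (x * y)) = a * b * (a * b) := by rw [hτ.map_mul_self, hmul]
    have hregroup : x * y * (x * y) = x * x * y * y := by
      simp only [mul_assoc, hxy.left_comm y]
    rcases hτ (x * x * y) y with h | h <;> rw [← hregroup, hsq, hright] at h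
    · have : b * a * b = a * b * b := mul_left_cancel (a := a) (by simpa only [mul_assoc] using h)
      exact (mul_right_cancel this).symm
    · have : a * b * a = b * a * a := mul_right_cancel (b := b) (by simpa only [mul_assoc] using h)
      exact mul_right_cancel this
  · rcases hleft with h | h <;> rw [hright] at h
    · exact (mul_left_cancel (a := a) (by simpa only [mul_assoc] using h)).symm
    · exact mul_right_cancel (b := a) (by simpa only [mul_assoc] using h)

theorem commute_map (hτ : IsHalfHom τ) {x y : G} (hxy : Commute x y) :
    Commute (τ x) (τ y) := by
  rcases hτ x y with hmul | hmul
  · exact hτ.commute_of_map_mul hxy hmul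
  · exact (hτ.op.commute_of_map_mul hxy (by simp [hmul])).unop

end IsHalfHom

/-- A half-isomorphism of groups maps the center onto the center. -/
theorem half_isomorphism_center {G H : Type*} [Group G] [Group H] (τ : G → H)
    (hbij : Function.Bijective τ)
    (hhalf : ∀ x y : G, τ (x * y) = τ x * τ y ∨ τ (x * y) = τ y * τ x) :
    τ '' (Subgroup.center G : Set G) = (Subgroup.center H : Set H) := by
  have hτ : IsHalfHom τ := hhalf
  ext h
  obtain ⟨g, rfl⟩ := hbij.2 h
  simp only [hbij.1.mem_set_image, SetLike.mem_coe, Subgroup.mem_center_iff, hbij.2.forall]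
  exact ⟨fun hg x => hτ.commute_map (hg x), fun hg x => hτ.commute_of_commute_map hbij.1 (hg x)⟩
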